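/- The cardinality of the projective line ℙ¹(ℤ/nℤ) over ℤ/nℤ equals n·∏_{p | n, p prime}(1 + 1/p). -/

import Mathlib

/-- Unimodular rows over `ZMod n`: pairs generating the unit ideal. -/
def UnimodularPair (n : ℕ) : Type :=
  {v : ZMod n × ZMod n // ∃ x y : ZMod n, x * v.1 + y * v.2 = 1}

/-- Unit scaling relation on unimodular pairs. -/
def unitRel (n : ℕ) (v w : UnimodularPair n) : Prop :=
  ∃ u : (ZMod n)ˣ, w.1 = ((u : ZMod n) * v.1.1, (u : ZMod n) * v.1.2)

/-- The projective line over `ZMod n`. -/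
def ProjLineZMod (n : ℕ) : Type := Quot (unitRel n)

/-!
The units of `ZMod n` act freely on unimodular pairs (if `u • (a, b) = (a, b)` and
`x a + y b = 1`, then `u = u (x a + y b) = x a + y b = 1`), with quotient `ℙ¹(ℤ/nℤ)`.
Hence `|ℙ¹(ℤ/nℤ)| · |(ℤ/nℤ)ˣ|` is the number of unimodular pairs, and by the Chinese remainder
theorem both counts are multiplicative in `n`. The ring `ZMod (p ^ k)` is local, so a pair is
unimodular iff one of its entries is a unit; with `m = p ^ (k - 1)` nonunits among `q = p ^ k`
elements, this leaves `q ^ 2 - m ^ 2 = (q - m) (q + m)` pairs, and `q - m` units.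
-/

section IsCoprime

variable {R S T : Type*}

theorem IsCoprime.eq_one_of_mul_eq_self [CommSemiring R] {a b u : R} (h : IsCoprime a b)
    (ha : u * a = a) (hb : u * b = b) : u = 1 := by
  obtain ⟨x, y, hxy⟩ := h
  calc u = u * (x * a + y * b) := by rw [hxy, mul_one]
    _ = x * (u * a) + y * (u * b) := by ring
    _ = 1 := by rw [ha, hb, hxy]

theorem isCoprime_prod_iff [CommSemiring S] [CommSemiring T] {x y : S × T} :
    IsCoprime x y ↔ IsCoprime x.1 y.1 ∧ IsCoprime x.2 y.2 := by
  constructor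
  · intro h
    exact ⟨h.map (RingHom.fst S T), h.map (RingHom.snd S T)⟩
  · rintro ⟨⟨a, b, h₁⟩, ⟨c, d, h₂⟩⟩
    exact ⟨(a, c), (b, d), Prod.ext h₁ h₂⟩

theorem isCoprime_map_ringEquiv_iff [CommSemiring R] [CommSemiring S] (e : R ≃+* S) {x y : R} :
    IsCoprime (e x) (e y) ↔ IsCoprime x y :=
  ⟨fun h => by simpa using h.map e.symm.toRingHom, fun h => h.map e.toRingHom⟩

theorem IsLocalRing.isCoprime_iff_isUnit_or_isUnit [CommSemiring R] [IsLocalRing R] {a b : R} :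
    IsCoprime a b ↔ IsUnit a ∨ IsUnit b := by
  constructor
  · rintro ⟨x, y, h⟩
    exact (isUnit_or_isUnit_of_add_one h).imp
      isUnit_of_mul_isUnit_right isUnit_of_mul_isUnit_right
  · rintro (ha | hb)
    · exact isCoprime_one_left.of_isCoprime_of_dvd_left (isUnit_iff_dvd_one.mp ha)
    · exact isCoprime_one_right.of_isCoprime_of_dvd_right (isUnit_iff_dvd_one.mp hb)

theorem card_isCoprime_of_ringEquiv [CommSemiring R] [CommSemiring S] [CommSemiring T]
    (e : R ≃+* S × T) :
    Nat.card {v : R × R // IsCoprime v.1 v.2} =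
      Nat.card {v : S × S // IsCoprime v.1 v.2} * Nat.card {v : T × T // IsCoprime v.1 v.2} := by
  let split : {v : R × R // IsCoprime v.1 v.2} ≃
      {w : (S × S) × (T × T) // IsCoprime w.1.1 w.1.2 ∧ IsCoprime w.2.1 w.2.2} :=
    ((e.toEquiv.prodCongr e.toEquiv).trans (Equiv.prodProdProdComm S T S T)).subtypeEquiv
      fun v => by
        rw [← isCoprime_map_ringEquiv_iff e, isCoprime_prod_iff]
        rfl
  rw [Nat.card_congr <| split.trans <| Equiv.subtypeProdEquivProd
    (p := fun v : S × S => IsCoprime v.1 v.2) (q := fun v : T × T => IsCoprime v.1 v.2),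
    Nat.card_prod]

theorem Nat.card_units_add_card_nonunits (M : Type*) [Monoid M] [Finite M] :
    Nat.card Mˣ + Nat.card (nonunits M) = Nat.card M := by
  rw [← Nat.card_range_of_injective Units.val_injective, Nat.card_coe_set_eq,
    Nat.card_coe_set_eq]
  exact Set.ncard_add_ncard_compl _

theorem IsLocalRing.card_isCoprime [CommRing R] [IsLocalRing R] [Finite R] :
    Nat.card {v : R × R // IsCoprime v.1 v.2} =
      Nat.card Rˣ * (Nat.card R + Nat.card (nonunits R)) := by
  have hcompl : {v : R × R | IsCoprime v.1 v.2}ᶜ = nonunits R ×ˢ nonunits R := by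
    ext v
    simp [isCoprime_iff_isUnit_or_isUnit, mem_nonunits_iff]
  have hpairs := Set.ncard_add_ncard_compl {v : R × R | IsCoprime v.1 v.2}
  rw [hcompl, Set.ncard_prod, Nat.card_prod, ← Nat.card_units_add_card_nonunits R,
    ← Nat.card_coe_set_eq, ← Nat.card_coe_set_eq (nonunits R)] at hpairs
  change Nat.card {v : R × R | IsCoprime v.1 v.2} = _
  rw [← Nat.card_units_add_card_nonunits R]
  linarith

end IsCoprime

theorem ZMod.isLocalRing_prime_pow {p k : ℕ} (hp : p.Prime) (hk : k ≠ 0) :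
    IsLocalRing (ZMod (p ^ k)) := by
  have : Fact p.Prime := ⟨hp⟩
  have : Fact (1 < p ^ k) := ⟨Nat.one_lt_pow hk hp.one_lt⟩
  exact IsLocalRing.of_surjective' (PadicInt.toZModPow k) (ZMod.ringHom_surjective _)

theorem ZMod.card_nonunits_prime_pow {p k : ℕ} (hp : p.Prime) (hk : k ≠ 0) :
    Nat.card (nonunits (ZMod (p ^ k))) = p ^ (k - 1) := by
  have : NeZero (p ^ k) := ⟨pow_ne_zero k hp.ne_zero⟩
  have hunits : Nat.card (ZMod (p ^ k))ˣ = p ^ k - p ^ (k - 1) := by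
    rw [Nat.card_eq_fintype_card, ZMod.card_units_eq_totient,
      Nat.totient_prime_pow hp (Nat.pos_of_ne_zero hk), Nat.mul_sub_one, ← pow_succ,
      Nat.sub_add_cancel (Nat.one_le_iff_ne_zero.mpr hk)]
  have hle : p ^ (k - 1) ≤ p ^ k := Nat.pow_le_pow_right hp.pos (Nat.sub_le k 1)
  have hcard := Nat.card_units_add_card_nonunits (ZMod (p ^ k))
  rw [hunits, Nat.card_zmod] at hcard
  omega

instance (n : ℕ) : MulAction (ZMod n)ˣ (UnimodularPair n) where
  smul u v := ⟨u • v.1, (isCoprime_group_smul u _ _).mpr v.2⟩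
  one_smul v := Subtype.ext (one_smul _ v.1)
  mul_smul u w v := Subtype.ext (mul_smul u w v.1)

namespace UnimodularPair

theorem stabilizer_eq_bot {n : ℕ} (v : UnimodularPair n) :
    MulAction.stabilizer (ZMod n)ˣ v = ⊥ := by
  refine (Subgroup.eq_bot_iff_forall _).mpr fun u hu => Units.ext ?_
  have hv := congrArg Subtype.val hu
  exact IsCoprime.eq_one_of_mul_eq_self v.2 (congrArg Prod.fst hv) (congrArg Prod.snd hv)

theorem card_mul {a b : ℕ} (h : a.Coprime b) :
    Nat.card (UnimodularPair (a * b)) =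
      Nat.card (UnimodularPair a) * Nat.card (UnimodularPair b) :=
  card_isCoprime_of_ringEquiv (ZMod.chineseRemainder h)

end UnimodularPair

namespace ProjLineZMod

theorem unitRel_iff {n : ℕ} {v w : UnimodularPair n} :
    unitRel n v w ↔ MulAction.orbitRel (ZMod n)ˣ (UnimodularPair n) v w := by
  rw [Setoid.comm', MulAction.orbitRel_apply]
  exact ⟨fun ⟨u, hu⟩ => ⟨u, (Subtype.ext hu).symm⟩,
    fun ⟨u, hu⟩ => ⟨u, congrArg Subtype.val hu.symm⟩⟩

def equivOrbitRelQuotient (n : ℕ) :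
    ProjLineZMod n ≃ MulAction.orbitRel.Quotient (ZMod n)ˣ (UnimodularPair n) :=
  Quot.congrRight fun _ _ => unitRel_iff

theorem card_mul_card_units (n : ℕ) :
    Nat.card (ProjLineZMod n) * Nat.card (ZMod n)ˣ = Nat.card (UnimodularPair n) := by
  rw [Nat.card_congr (MulAction.selfEquivOrbitsQuotientProd UnimodularPair.stabilizer_eq_bot),
    Nat.card_prod, Nat.card_congr (equivOrbitRelQuotient n)]

theorem card_one : Nat.card (ProjLineZMod 1) = 1 := by
  have : Subsingleton (UnimodularPair 1) := inferInstanceAs (Subsingleton (Subtype _))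
  exact Nat.card_eq_one_iff_unique.mpr ⟨inferInstanceAs (Subsingleton (Quot _)),
    ⟨Quot.mk _ ⟨0, isCoprime_self.mpr (isUnit_of_subsingleton _)⟩⟩⟩

theorem card_mul {a b : ℕ} (h : a.Coprime b) :
    Nat.card (ProjLineZMod (a * b)) = Nat.card (ProjLineZMod a) * Nat.card (ProjLineZMod b) := by
  have hunits : Nat.card (ZMod (a * b))ˣ = Nat.card (ZMod a)ˣ * Nat.card (ZMod b)ˣ := by
    rw [← Nat.card_prod]
    exact Nat.card_congr
      ((Units.mapEquiv (ZMod.chineseRemainder h).toMulEquiv).trans MulEquiv.prodUnits).toEquiv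
  refine Nat.eq_of_mul_eq_mul_right (Nat.card_pos (α := (ZMod (a * b))ˣ)) ?_
  rw [card_mul_card_units, UnimodularPair.card_mul h, hunits, ← card_mul_card_units,
    ← card_mul_card_units]
  ring

theorem card_prime_pow {p k : ℕ} (hp : p.Prime) (hk : k ≠ 0) :
    Nat.card (ProjLineZMod (p ^ k)) = p ^ k + p ^ (k - 1) := by
  have := ZMod.isLocalRing_prime_pow hp hk
  have : NeZero (p ^ k) := ⟨pow_ne_zero k hp.ne_zero⟩
  refine Nat.eq_of_mul_eq_mul_right (Nat.card_pos (α := (ZMod (p ^ k))ˣ)) ?_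
  rw [card_mul_card_units]
  change Nat.card {v : ZMod (p ^ k) × ZMod (p ^ k) // IsCoprime v.1 v.2} = _
  rw [IsLocalRing.card_isCoprime, Nat.card_zmod, ZMod.card_nonunits_prime_pow hp hk, mul_comm]

end ProjLineZMod

theorem card_projective_line_zmod (n : ℕ) (hn : 0 < n) :
    (Nat.card (ProjLineZMod n) : ℚ) =
      (n : ℚ) * ∏ p ∈ n.primeFactors, (1 + 1 / (p : ℚ)) := by
  induction n using Nat.recOnPosPrimePosCoprime with
  | zero => exact absurd hn (lt_irrefl 0)
  | one => simp [ProjLineZMod.card_one]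
  | prime_pow p k hp hk =>
    have hp0 : (p : ℚ) ≠ 0 := Nat.cast_ne_zero.mpr hp.ne_zero
    obtain ⟨j, rfl⟩ := Nat.exists_eq_add_of_lt hk
    rw [ProjLineZMod.card_prime_pow hp (by omega), Nat.primeFactors_prime_pow (by omega) hp,
      Finset.prod_singleton]
    field_simp
    push_cast
    ring
  | coprime a b ha hb hab iha ihb =>
    rw [ProjLineZMod.card_mul hab, Nat.cast_mul, iha (by omega), ihb (by omega),
      Nat.primeFactors_mul (by omega) (by omega),
      Finset.prod_union hab.disjoint_primeFactors]
    push_cast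
    ring
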